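/- arXiv:1507.02900 — 2 statements merged into one kernel-verified Lean document; each statement's English description precedes it below -/
import Mathlib

section
/- Let P be a map from nonnegative finite measures on ℝ^d (with mass at most |Ω|) to densities on Ω bounded by 1, satisfying: (a) monotonicity: if ρ ≤ η (as measures) then P(ρ) ≤ P(η) a.e.; (b) mass preservation: ∫ P(ρ) dx equals the total mass of ρ. Then for any two probability densities ρ₁, ρ₂, one has ‖P(ρ₁) − P(ρ₂)‖_{L¹} ≤ ‖ρ₁ − ρ₂‖_{L¹}. -/
/-!
For `ρ = min ρ₁ ρ₂` one has `‖ρ₁ - ρ₂‖₁ = 2 - 2 ∫ ρ`, and likewise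
`‖P ρ₁ - P ρ₂‖₁ = 2 - 2 ∫ min (P ρ₁) (P ρ₂)` by mass preservation. Monotonicity gives
`P ρ ≤ min (P ρ₁) (P ρ₂)`, and `∫ P ρ = ∫ ρ`, whence the contraction.
-/

open MeasureTheory

section

variable {α : Type*} [MeasurableSpace α] {μ : Measure α}

theorem integral_abs_sub_eq_sub_two_mul_integral_min {f g : α → ℝ} (hf : Integrable f μ)
    (hg : Integrable g μ) :
    ∫ x, |f x - g x| ∂μ = ∫ x, f x ∂μ + ∫ x, g x ∂μ - 2 * ∫ x, min (f x) (g x) ∂μ := by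
  have hmin : Integrable (fun x => min (f x) (g x)) μ := hf.inf hg
  rw [← integral_add hf hg, ← integral_const_mul,
    ← integral_sub (f := fun x => f x + g x) (hf.add hg) (hmin.const_mul 2)]
  congr 1 with x
  rw [← max_sub_min_eq_abs', ← min_add_max (f x) (g x)]
  ring

variable [SFinite μ] {f g : α → ℝ} {Ω : Set α}

theorem withDensity_ofReal_apply_univ (hf : Integrable f μ) (hf₀ : 0 ≤ᵐ[μ] f) :
    μ.withDensity (fun x => ENNReal.ofReal (f x)) Set.univ = ENNReal.ofReal (∫ x, f x ∂μ) := by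
  rw [withDensity_apply' _ Set.univ, setLIntegral_univ, ofReal_integral_eq_lintegral_ofReal hf hf₀]

theorem withDensity_ofReal_apply_univ_le (hΩ : 1 ≤ μ Ω) (hf : Integrable f μ)
    (hf₀ : 0 ≤ᵐ[μ] f) (hf₁ : ∫ x, f x ∂μ ≤ 1) :
    μ.withDensity (fun x => ENNReal.ofReal (f x)) Set.univ ≤ μ Ω :=
  withDensity_ofReal_apply_univ hf hf₀ ▸ (ENNReal.ofReal_le_one.2 hf₁).trans hΩ

variable {P : Measure α → α → ℝ}

theorem integral_apply_withDensity_ofReal_of_mass_preserving (hΩ : 1 ≤ μ Ω)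
    (hPmass : ∀ ν : Measure α, ν Set.univ ≤ μ Ω → ∫ x, P ν x ∂μ = (ν Set.univ).toReal)
    (hf : Integrable f μ) (hf₀ : 0 ≤ᵐ[μ] f) (hf₁ : ∫ x, f x ∂μ ≤ 1) :
    ∫ x, P (μ.withDensity fun x => ENNReal.ofReal (f x)) x ∂μ = ∫ x, f x ∂μ := by
  rw [hPmass _ (withDensity_ofReal_apply_univ_le hΩ hf hf₀ hf₁),
    withDensity_ofReal_apply_univ hf hf₀, ENNReal.toReal_ofReal (integral_nonneg_of_ae hf₀)]

theorem ae_apply_withDensity_ofReal_min_le_of_monotone (hΩ : 1 ≤ μ Ω)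
    (hPmono : ∀ ν ν' : Measure α, ν ≤ ν' → ν' Set.univ ≤ μ Ω → ∀ᵐ x ∂μ, P ν x ≤ P ν' x)
    (hf : Integrable f μ) (hf₀ : 0 ≤ᵐ[μ] f) (hf₁ : ∫ x, f x ∂μ ≤ 1)
    (hg : Integrable g μ) (hg₀ : 0 ≤ᵐ[μ] g) (hg₁ : ∫ x, g x ∂μ ≤ 1) :
    ∀ᵐ x ∂μ, P (μ.withDensity fun x => ENNReal.ofReal (min (f x) (g x))) x
      ≤ min (P (μ.withDensity fun x => ENNReal.ofReal (f x)) x)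
        (P (μ.withDensity fun x => ENNReal.ofReal (g x)) x) := by
  filter_upwards [hPmono _ _ (withDensity_mono (.of_forall fun x => ENNReal.ofReal_le_ofReal
        (min_le_left _ _))) (withDensity_ofReal_apply_univ_le hΩ hf hf₀ hf₁),
      hPmono _ _ (withDensity_mono (.of_forall fun x => ENNReal.ofReal_le_ofReal
        (min_le_right _ _))) (withDensity_ofReal_apply_univ_le hΩ hg hg₀ hg₁)]
    with x h₁ h₂ using le_min h₁ h₂

end

theorem projection_L1_contraction_general {d : ℕ}
    (Ω : Set (EuclideanSpace ℝ (Fin d)))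
    (hΩvol : 1 < volume Ω)
    (P : Measure (EuclideanSpace ℝ (Fin d)) → EuclideanSpace ℝ (Fin d) → ℝ)
    (hPbound : ∀ μ, ∀ x, 0 ≤ P μ x ∧ P μ x ≤ 1)
    (hPmono : ∀ μ ν : Measure (EuclideanSpace ℝ (Fin d)),
      μ ≤ ν → ν Set.univ ≤ volume Ω → ∀ᵐ x, P μ x ≤ P ν x)
    (hPmass : ∀ μ : Measure (EuclideanSpace ℝ (Fin d)),
      μ Set.univ ≤ volume Ω → ∫ x, P μ x = (μ Set.univ).toReal)
    (ρ₁ ρ₂ : EuclideanSpace ℝ (Fin d) → ℝ)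
    (h₁pos : ∀ x, 0 ≤ ρ₁ x) (h₂pos : ∀ x, 0 ≤ ρ₂ x)
    (h₁int : Integrable ρ₁) (h₂int : Integrable ρ₂)
    (h₁mass : ∫ x, ρ₁ x = 1) (h₂mass : ∫ x, ρ₂ x = 1) :
    ∫ x, |P (volume.withDensity (fun x => ENNReal.ofReal (ρ₁ x))) x
          - P (volume.withDensity (fun x => ENNReal.ofReal (ρ₂ x))) x|
      ≤ ∫ x, |ρ₁ x - ρ₂ x| := by
  have hρint : Integrable (fun x => min (ρ₁ x) (ρ₂ x)) := h₁int.inf h₂int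
  have hρ₀ : 0 ≤ᵐ[volume] fun x => min (ρ₁ x) (ρ₂ x) :=
    .of_forall fun x => le_min (h₁pos x) (h₂pos x)
  have hρmass : ∫ x, min (ρ₁ x) (ρ₂ x) ≤ 1 :=
    h₁mass ▸ integral_mono hρint h₁int fun x => min_le_left _ _
  have hP₁ := integral_apply_withDensity_ofReal_of_mass_preserving hΩvol.le hPmass
    h₁int (.of_forall h₁pos) h₁mass.le
  have hP₂ := integral_apply_withDensity_ofReal_of_mass_preserving hΩvol.le hPmass
    h₂int (.of_forall h₂pos) h₂mass.le
  have hP := integral_apply_withDensity_ofReal_of_mass_preserving hΩvol.le hPmass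
    hρint hρ₀ hρmass
  have hPmin := ae_apply_withDensity_ofReal_min_le_of_monotone hΩvol.le hPmono
    h₁int (.of_forall h₁pos) h₁mass.le h₂int (.of_forall h₂pos) h₂mass.le
  have hP₁int := Integrable.of_integral_ne_zero (hP₁.trans h₁mass ▸ one_ne_zero)
  have hP₂int := Integrable.of_integral_ne_zero (hP₂.trans h₂mass ▸ one_ne_zero)
  have hPρ_le := integral_mono_of_nonneg (.of_forall fun x => (hPbound _ x).1)
    (hP₁int.inf hP₂int) hPmin
  rw [hP] at hPρ_le
  rw [integral_abs_sub_eq_sub_two_mul_integral_min hP₁int hP₂int, hP₁, hP₂,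
    integral_abs_sub_eq_sub_two_mul_integral_min h₁int h₂int]
  exact sub_le_sub_left (mul_le_mul_of_nonneg_left hPρ_le zero_le_two) _

/-- Any monotone, mass-preserving projection `P` from nonnegative measures of mass at
most `|Ω|` to densities on `Ω` bounded by `1` is an `L¹`-contraction on probability
densities. -/
theorem projection_L1_contraction {d : ℕ}
    (Ω : Set (EuclideanSpace ℝ (Fin d))) (hΩm : MeasurableSet Ω)
    (hΩvol : 1 < volume Ω)
    (P : Measure (EuclideanSpace ℝ (Fin d)) → EuclideanSpace ℝ (Fin d) → ℝ)
    (hPmeas : ∀ μ, Measurable (P μ))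
    (hPbound : ∀ μ, ∀ x, 0 ≤ P μ x ∧ P μ x ≤ 1)
    (hPsupp : ∀ μ, ∀ x ∉ Ω, P μ x = 0)
    (hPmono : ∀ μ ν : Measure (EuclideanSpace ℝ (Fin d)),
      μ ≤ ν → ν Set.univ ≤ volume Ω → ∀ᵐ x, P μ x ≤ P ν x)
    (hPmass : ∀ μ : Measure (EuclideanSpace ℝ (Fin d)),
      μ Set.univ ≤ volume Ω → ∫ x, P μ x = (μ Set.univ).toReal)
    (ρ₁ ρ₂ : EuclideanSpace ℝ (Fin d) → ℝ)
    (h₁m : Measurable ρ₁) (h₂m : Measurable ρ₂)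
    (h₁pos : ∀ x, 0 ≤ ρ₁ x) (h₂pos : ∀ x, 0 ≤ ρ₂ x)
    (h₁int : Integrable ρ₁) (h₂int : Integrable ρ₂)
    (h₁mass : ∫ x, ρ₁ x = 1) (h₂mass : ∫ x, ρ₂ x = 1) :
    ∫ x, |P (volume.withDensity (fun x => ENNReal.ofReal (ρ₁ x))) x
          - P (volume.withDensity (fun x => ENNReal.ofReal (ρ₂ x))) x|
      ≤ ∫ x, |ρ₁ x - ρ₂ x| :=
  projection_L1_contraction_general Ω hΩvol P hPbound hPmono hPmass ρ₁ ρ₂ h₁pos h₂pos h₁int h₂int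
    h₁mass h₂mass
end

section
/- Let Ω ⊂ ℝ^d be a bounded convex open set, and let ρ₀, ρ₁ be absolutely continuous probability measures on Ω with densities ≤ 1 a.e. Let T be the optimal transport map from ρ₀ to ρ₁ for the quadratic cost, and define the geodesic interpolation ρ_t = ((1−t)id + tT)_♯ ρ₀ for t ∈ [0,1]. Then for every t ∈ [0,1], ρ_t is absolutely continuous with density ≤ 1 a.e. -/
/-!
For `0 < t < 1`, `S = (1 - t) • id + t • ∇ψ` is the gradient of the `(1 - t)`-strongly convex
function `(1 - t) / 2 * ‖x‖ ^ 2 + t * ψ x`. So `S` is a bijection whose inverse `g` is Lipschitz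
and is the gradient of the convex conjugate; hence `Dg` is symmetric and positive semidefinite
almost everywhere. The map `g₁ = ∇ψ ∘ g` is monotone, `(1 - t) • g + t • g₁ = id` and
`g₁ ∘ S = ∇ψ`. Thus `(1 - t) • Dg + t • Dg₁ = 1`, and weighted AM-GM on the common eigenvalues gives
`det Dg ^ (1 - t) * det Dg₁ ^ t ≤ 1`: at each point one of `g`, `g₁` does not expand volume. Where
`g` does not, the mass that `S_♯ρ₀` puts there is bounded using `ρ₀ ≤ 1`; where `g₁` does not,
using `ρ₁ = (∇ψ)_♯ρ₀ ≤ 1`.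
-/

open MeasureTheory Set Filter Topology
open scoped RealInnerProductSpace

section InnerProductSpace

variable {F : Type*} [NormedAddCommGroup F] [InnerProductSpace ℝ F]

def IsMonotoneOperator (f : F → F) : Prop :=
  ∀ x y, 0 ≤ ⟪f x - f y, x - y⟫

theorem IsMonotoneOperator.isPositive_of_hasFDerivAt {f : F → F}
    (hf : IsMonotoneOperator f) {D : F →L[ℝ] F} {y : F} (hD : HasFDerivAt f D y)
    (hsymm : (D : F →ₗ[ℝ] F).IsSymmetric) : (D : F →ₗ[ℝ] F).IsPositive := by
  refine (LinearMap.isPositive_iff _).mpr ⟨hsymm, fun v => ?_⟩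
  have hline : HasDerivAt (fun s : ℝ => ⟪f (y + s • v), v⟫) ⟪D v, v⟫ 0 := by
    have hD' : HasFDerivAt f D (y + (0 : ℝ) • v) := by simpa using hD
    have := hD'.comp_hasDerivAt (0 : ℝ) (((hasDerivAt_id (0 : ℝ)).smul_const v).const_add y)
    simpa using this.inner ℝ (hasDerivAt_const (0 : ℝ) v)
  refine hline.nonneg_of_monotone fun s s' hss' => ?_
  have h := hf (y + s' • v) (y + s • v)
  rw [add_sub_add_left_eq_sub, ← sub_smul, real_inner_smul_right, inner_sub_left] at h
  rcases hss'.lt_or_eq with hlt | rfl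
  · nlinarith
  · rfl

theorem ConvexOn.strongConvexOn_interpolationPotential {ψ : F → ℝ} {t : ℝ}
    (hψ : ConvexOn ℝ univ ψ) (ht : 0 ≤ t) :
    StrongConvexOn univ (1 - t) fun x => (1 - t) / 2 * ‖x‖ ^ 2 + t * ψ x := by
  rw [strongConvexOn_iff_convex]
  simpa using hψ.smul ht

end InnerProductSpace

section Gradient

variable {F : Type*} [NormedAddCommGroup F] [InnerProductSpace ℝ F] [CompleteSpace F]

theorem ConvexOn.add_inner_le_of_hasGradientAt {ψ : F → ℝ} {g a : F}
    (hψ : ConvexOn ℝ univ ψ) (h : HasGradientAt ψ g a) (b : F) : ψ a + ⟪g, b - a⟫ ≤ ψ b := by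
  have hline : HasDerivAt (ψ ∘ AffineMap.lineMap a b) ⟪g, b - a⟫ (0 : ℝ) := by
    have h' : HasFDerivAt ψ (InnerProductSpace.toDual ℝ F g) (AffineMap.lineMap a b (0 : ℝ)) := by
      simpa using hasGradientAt_iff_hasFDerivAt.mp h
    simpa using h'.comp_hasDerivAt (0 : ℝ) AffineMap.hasDerivAt_lineMap
  have := (hψ.comp_affineMap (AffineMap.lineMap a b)).le_slope_of_hasDerivAt (mem_univ _)
    (mem_univ _) one_pos hline
  simp only [slope_def_field, Function.comp_apply, AffineMap.lineMap_apply_one,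
    AffineMap.lineMap_apply_zero, sub_zero, div_one] at this
  linarith

theorem ConvexOn.isMonotoneOperator_gradient {ψ : F → ℝ} (hψ : ConvexOn ℝ univ ψ)
    (hd : Differentiable ℝ ψ) : IsMonotoneOperator (gradient ψ) := by
  intro a b
  have hab := hψ.add_inner_le_of_hasGradientAt (hd a).hasGradientAt b
  have hba := hψ.add_inner_le_of_hasGradientAt (hd b).hasGradientAt a
  simp only [inner_sub_left, inner_sub_right] at *
  linarith

theorem hasGradientAt_norm_sq (x : F) : HasGradientAt (fun x => ‖x‖ ^ 2) ((2 : ℝ) • x) x := by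
  have h : InnerProductSpace.toDual ℝ F ((2 : ℝ) • x) = 2 • innerSL ℝ x := by
    ext v
    simp
  rw [hasGradientAt_iff_hasFDerivAt, h]
  exact (hasStrictFDerivAt_norm_sq x).hasFDerivAt

theorem StrongConvexOn.add_inner_add_le_of_hasGradientAt {φ : F → ℝ} {m : ℝ} {g a : F}
    (hφ : StrongConvexOn univ m φ) (h : HasGradientAt φ g a) (b : F) :
    φ a + ⟪g, b - a⟫ + m / 2 * ‖b - a‖ ^ 2 ≤ φ b := by
  have hχ : HasGradientAt (fun x => φ x - m / 2 * ‖x‖ ^ 2) (g - m • a) a := by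
    have hq := (hasGradientAt_iff_hasFDerivAt.mp (hasGradientAt_norm_sq a)).const_mul (m / 2)
    rw [hasGradientAt_iff_hasFDerivAt]
    refine ((hasGradientAt_iff_hasFDerivAt.mp h).sub hq).congr_fderiv ?_
    ext v
    simp only [map_smul, sub_apply, InnerProductSpace.toDual_apply_apply, smul_apply, smul_eq_mul,
      map_sub, sub_right_inj]
    ring
  have := (strongConvexOn_iff_convex.mp hφ).add_inner_le_of_hasGradientAt hχ b
  simp only [inner_sub_left, inner_sub_right, real_inner_smul_left, real_inner_self_eq_norm_sq,
    norm_sub_sq_real] at this ⊢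
  rw [real_inner_comm a b]
  linarith

theorem hasGradientAt_interpolationPotential {ψ : F → ℝ} {t : ℝ} {x : F}
    (hψ : DifferentiableAt ℝ ψ x) :
    HasGradientAt (fun x => (1 - t) / 2 * ‖x‖ ^ 2 + t * ψ x) ((1 - t) • x + t • gradient ψ x)
      x := by
  rw [hasGradientAt_iff_hasFDerivAt]
  refine (((hasGradientAt_iff_hasFDerivAt.mp (hasGradientAt_norm_sq x)).const_mul ((1 - t) / 2)).add
    ((hasGradientAt_iff_hasFDerivAt.mp hψ.hasGradientAt).const_mul t)).congr_fderiv ?_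
  ext v
  simp only [map_smul, toDual_gradient, add_apply, smul_apply, InnerProductSpace.toDual_apply_apply,
    smul_eq_mul, map_add, add_left_inj]
  ring

theorem gradient_comp_eq_of_rightInverse {ψ : F → ℝ} {t : ℝ} {g : F → F} (ht0 : 0 < t)
    (hg : Function.RightInverse g fun x => (1 - t) • x + t • gradient ψ x) (y : F) :
    gradient ψ (g y) = t⁻¹ • (y - (1 - t) • g y) := by
  rw [eq_inv_smul_iff₀ ht0.ne', eq_sub_iff_add_eq']
  exact hg y

theorem ConvexOn.isMonotoneOperator_gradient_comp {ψ : F → ℝ} {t : ℝ} {g : F → F}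
    (hψ : ConvexOn ℝ univ ψ) (hψd : Differentiable ℝ ψ) (ht0 : 0 ≤ t) (ht1 : t ≤ 1)
    (hg : Function.RightInverse g fun x => (1 - t) • x + t • gradient ψ x) :
    IsMonotoneOperator (gradient ψ ∘ g) := by
  intro y y'
  have hmono := hψ.isMonotoneOperator_gradient hψd (g y) (g y')
  have hsplit : y - y' = (1 - t) • (g y - g y') + t • (gradient ψ (g y) - gradient ψ (g y')) := by
    have hy : (1 - t) • g y + t • gradient ψ (g y) = y := hg y
    have hy' : (1 - t) • g y' + t • gradient ψ (g y') = y' := hg y'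
    linear_combination (norm := module) hy' - hy
  rw [Function.comp_apply, Function.comp_apply, hsplit, inner_add_right, real_inner_smul_right,
    real_inner_smul_right, real_inner_self_eq_norm_sq]
  have : 0 ≤ 1 - t := by linarith
  positivity

end Gradient

section StrongConvexInverse

variable {F : Type*} [NormedAddCommGroup F] [InnerProductSpace ℝ F] [CompleteSpace F]
  {φ : F → ℝ} {S : F → F} {m : ℝ}

namespace StrongConvexOn

variable (hφ : StrongConvexOn univ m φ) (hS : ∀ x, HasGradientAt φ (S x) x)
include hφ hS

theorem mul_sq_norm_sub_le_inner (a b : F) : m * ‖a - b‖ ^ 2 ≤ ⟪S a - S b, a - b⟫ := by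
  have hab := hφ.add_inner_add_le_of_hasGradientAt (hS a) b
  have hba := hφ.add_inner_add_le_of_hasGradientAt (hS b) a
  rw [norm_sub_rev] at hab
  simp only [inner_sub_left, inner_sub_right] at *
  linarith

theorem surjective_of_hasGradientAt [FiniteDimensional ℝ F] (hm : 0 < m) :
    Function.Surjective S := by
  intro y
  set f : F → ℝ := fun z => φ z - ⟪y, z⟫
  have hf : Continuous f :=
    (continuous_iff_continuousAt.mpr fun x => (hS x).continuousAt).sub
      (continuous_const.inner continuous_id)
  have hcoercive : Tendsto f (cocompact F) atTop := by
    set K := ‖S 0 - y‖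
    have hquad : Tendsto (fun r : ℝ => φ 0 + r * (m / 2 * r - K)) atTop atTop :=
      tendsto_atTop_add_const_left _ _ (tendsto_id.atTop_mul_atTop₀
        (tendsto_atTop_add_const_right _ _ (tendsto_id.const_mul_atTop (by positivity))))
    refine tendsto_atTop_mono (fun z => ?_) (hquad.comp tendsto_norm_cocompact_atTop)
    have h0 := hφ.add_inner_add_le_of_hasGradientAt (hS 0) z
    have hK : -(K * ‖z‖) ≤ ⟪S 0 - y, z⟫ := by
      have := abs_real_inner_le_norm (S 0 - y) z
      have := neg_abs_le ⟪S 0 - y, z⟫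
      linarith
    simp only [sub_zero, inner_sub_left] at h0 hK
    simp only [Function.comp_apply, f]
    nlinarith
  obtain ⟨x, hx⟩ := hf.exists_forall_le hcoercive
  refine ⟨x, ?_⟩
  have hmin : IsLocalMin f x := (IsMinOn.isLocalMin (fun z _ => hx z) univ_mem)
  have hder : HasFDerivAt f (InnerProductSpace.toDual ℝ F (S x - y)) x := by
    rw [map_sub]
    exact (hasGradientAt_iff_hasFDerivAt.mp (hS x)).sub (innerSL ℝ y).hasFDerivAt
  have := hmin.hasFDerivAt_eq_zero hder
  rw [LinearIsometryEquiv.map_eq_zero_iff, sub_eq_zero] at this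
  exact this

variable {g : F → F} (hg : Function.RightInverse g S)
include hg

theorem sub_inner_le_of_rightInverse (hm : 0 ≤ m) (y z : F) :
    φ (g y) - ⟪y, g y⟫ ≤ φ z - ⟪y, z⟫ := by
  have h := hφ.add_inner_add_le_of_hasGradientAt (hS (g y)) z
  rw [hg y, inner_sub_right] at h
  nlinarith [sq_nonneg ‖z - g y‖]

theorem leftInverse_of_rightInverse (hm : 0 < m) : Function.LeftInverse g S := by
  intro x
  have h := hφ.mul_sq_norm_sub_le_inner hS (g (S x)) x
  rw [hg (S x), sub_self, inner_zero_left] at h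
  have : ‖g (S x) - x‖ ^ 2 = 0 := le_antisymm (by nlinarith) (sq_nonneg _)
  rwa [pow_eq_zero_iff two_ne_zero, norm_eq_zero, sub_eq_zero] at this

theorem mul_sq_norm_sub_le_inner_of_rightInverse (y y' : F) :
    m * ‖g y - g y'‖ ^ 2 ≤ ⟪y - y', g y - g y'⟫ := by
  have h := hφ.mul_sq_norm_sub_le_inner hS (g y) (g y')
  rwa [hg y, hg y'] at h

theorem isMonotoneOperator_of_rightInverse (hm : 0 ≤ m) : IsMonotoneOperator g := by
  intro y y'
  have h := hφ.mul_sq_norm_sub_le_inner_of_rightInverse hS hg y y'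
  rw [real_inner_comm]
  nlinarith [sq_nonneg ‖g y - g y'‖]

theorem lipschitzWith_of_rightInverse (hm : 0 < m) : LipschitzWith (Real.toNNReal m⁻¹) g := by
  refine LipschitzWith.of_dist_le_mul fun y y' => ?_
  rw [dist_eq_norm, dist_eq_norm, Real.coe_toNNReal _ (inv_pos.mpr hm).le, ← div_eq_inv_mul,
    le_div_iff₀ hm]
  have h := hφ.mul_sq_norm_sub_le_inner_of_rightInverse hS hg y y'
  have hcs := real_inner_le_norm (y - y') (g y - g y')
  rcases (norm_nonneg (g y - g y')).eq_or_lt with h0 | h0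
  · rw [← h0, zero_mul]
    exact norm_nonneg _
  · nlinarith

/-- `fun z => ⟪z, g z⟫ - φ (g z)` is the convex conjugate of `φ`: `g z` maximises `⟪z, ·⟫ - φ`. -/
theorem hasGradientAt_conjugate_of_rightInverse (hm : 0 < m) (y : F) :
    HasGradientAt (fun z => ⟪z, g z⟫ - φ (g z)) (g y) y := by
  set φstar : F → ℝ := fun z => ⟪z, g z⟫ - φ (g z)
  have hlower : ∀ z, 0 ≤ φstar z - φstar y - ⟪g y, z - y⟫ := by
    intro z
    have h := hφ.sub_inner_le_of_rightInverse hS hg hm.le z (g y)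
    simp only [φstar, inner_sub_right, real_inner_comm (g y)] at h ⊢
    linarith
  have hupper : ∀ z, φstar z - φstar y - ⟪g y, z - y⟫ ≤ ‖z - y‖ * ‖g z - g y‖ := by
    intro z
    have h := hφ.sub_inner_le_of_rightInverse hS hg hm.le y (g z)
    have hcs := real_inner_le_norm (z - y) (g z - g y)
    simp only [φstar, inner_sub_right, real_inner_comm (g y), real_inner_comm (g z)] at *
    linarith
  have hcont : Tendsto (fun z => g z - g y) (𝓝 y) (𝓝 0) := by
    rw [tendsto_sub_nhds_zero_iff]
    exact (hφ.lipschitzWith_of_rightInverse hS hg hm).continuous.tendsto y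
  have hsmall : (fun z => ‖z - y‖ * ‖g z - g y‖) =o[𝓝 y] fun z => z - y := by
    have := (Asymptotics.isBigO_refl (fun z => ‖z - y‖) (𝓝 y)).mul_isLittleO
      ((Asymptotics.isLittleO_one_iff ℝ).mpr hcont).norm_left
    simpa using this
  rw [hasGradientAt_iff_hasFDerivAt, hasFDerivAt_iff_isLittleO]
  refine Asymptotics.IsBigO.trans_isLittleO (Asymptotics.IsBigO.of_bound 1
    (Eventually.of_forall fun z => ?_)) hsmall
  rw [InnerProductSpace.toDual_apply_apply, one_mul, Real.norm_eq_abs, Real.norm_eq_abs,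
    abs_of_nonneg (hlower z), abs_of_nonneg (by positivity)]
  exact hupper z

theorem isSymmetric_fderiv_of_rightInverse (hm : 0 < m) {y : F} (hy : DifferentiableAt ℝ g y) :
    (fderiv ℝ g y : F →ₗ[ℝ] F).IsSymmetric := by
  have hconj : ∀ z, HasFDerivAt (fun z => ⟪z, g z⟫ - φ (g z)) (innerSL ℝ (g z)) z := fun z =>
    hasGradientAt_iff_hasFDerivAt.mp (hφ.hasGradientAt_conjugate_of_rightInverse hS hg hm z)
  have hsecond : HasFDerivAt (fun z => innerSL ℝ (g z)) ((innerSL ℝ).comp (fderiv ℝ g y)) y :=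
    (innerSL ℝ).hasFDerivAt.comp y hy.hasFDerivAt
  intro v w
  have := second_derivative_symmetric hconj hsecond v w
  simp only [ContinuousLinearMap.comp_apply, innerSL_apply_apply] at this
  simp only [ContinuousLinearMap.coe_coe]
  rw [this, real_inner_comm]

end StrongConvexOn

end StrongConvexInverse

theorem LinearMap.det_eq_prod_of_apply_basis {ι R M : Type*} [CommRing R] [AddCommGroup M]
    [Module R M] [Fintype ι] [DecidableEq ι] (b : Module.Basis ι R M) {L : M →ₗ[R] M}
    {c : ι → R} (h : ∀ i, L (b i) = c i • b i) : L.det = ∏ i, c i := by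
  have hL : L = Matrix.toLin b b (Matrix.diagonal c) :=
    b.ext fun i => by simp [Matrix.toLin_self, Matrix.diagonal_apply, h]
  rw [hL, LinearMap.det_toLin, Matrix.det_diagonal]

namespace LinearMap.IsPositive

variable {F : Type*} [NormedAddCommGroup F] [InnerProductSpace ℝ F] [FiniteDimensional ℝ F]
  {A B : F →ₗ[ℝ] F}

theorem det_nonneg (hA : A.IsPositive) : 0 ≤ A.det := by
  rw [hA.isSymmetric.det_eq_prod_eigenvalues rfl]
  exact Finset.prod_nonneg fun i _ => hA.nonneg_eigenvalues rfl i

/-- Both operators are diagonal in an eigenbasis of `A`, so this is weighted AM-GM for each pair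
of eigenvalues. -/
theorem det_rpow_mul_det_rpow_le_one (hA : A.IsPositive) (hB : B.IsPositive) {t : ℝ}
    (ht0 : 0 < t) (ht1 : t ≤ 1) (hAB : (1 - t) • A + t • B = 1) :
    A.det ^ (1 - t) * B.det ^ t ≤ 1 := by
  set b := hA.isSymmetric.eigenvectorBasis rfl
  set μ := hA.isSymmetric.eigenvalues rfl
  set ν : Fin (Module.finrank ℝ F) → ℝ := fun i => t⁻¹ * (1 - (1 - t) * μ i)
  have hAb : ∀ i, A (b i) = μ i • b i := hA.isSymmetric.apply_eigenvectorBasis rfl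
  have hBb : ∀ i, B (b i) = ν i • b i := fun i => by
    have h := congrArg (fun L : F →ₗ[ℝ] F => L (b i)) hAB
    simp only [LinearMap.add_apply, LinearMap.smul_apply, hAb, Module.End.one_apply] at h
    rw [← inv_smul_smul₀ ht0.ne' (B (b i)), eq_sub_of_add_eq' h]
    module
  have hμ : ∀ i, 0 ≤ μ i := hA.nonneg_eigenvalues rfl
  have hν : ∀ i, 0 ≤ ν i := fun i => by
    simpa [hBb, real_inner_smul_left] using hB.inner_nonneg_left (b i)
  have hamgm : ∀ i, μ i ^ (1 - t) * ν i ^ t ≤ 1 := fun i => by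
    refine (Real.geom_mean_le_arith_mean2_weighted (by linarith) ht0.le (hμ i) (hν i)
      (by ring)).trans_eq ?_
    simp only [ν]
    field_simp
    ring
  rw [LinearMap.det_eq_prod_of_apply_basis b.toBasis (by simpa using hAb),
    LinearMap.det_eq_prod_of_apply_basis b.toBasis (by simpa using hBb),
    ← Real.finsetProd_rpow _ _ (fun i _ => hμ i), ← Real.finsetProd_rpow _ _ (fun i _ => hν i),
    ← Finset.prod_mul_distrib]
  exact Finset.prod_le_one (fun i _ => mul_nonneg (Real.rpow_nonneg (hμ i) _)
    (Real.rpow_nonneg (hν i) _)) fun i _ => hamgm i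

theorem abs_det_le_one_or (hA : A.IsPositive) (hB : B.IsPositive) {t : ℝ}
    (ht0 : 0 < t) (ht1 : t ≤ 1) (hAB : (1 - t) • A + t • B = 1) :
    |A.det| ≤ 1 ∨ |B.det| ≤ 1 := by
  rw [abs_of_nonneg hA.det_nonneg, abs_of_nonneg hB.det_nonneg]
  by_contra! h
  have hA1 : 1 ≤ A.det ^ (1 - t) := Real.one_le_rpow h.1.le (by linarith)
  have hB1 : 1 < B.det ^ t := Real.one_lt_rpow h.2 ht0
  have := hA.det_rpow_mul_det_rpow_le_one hB ht0 ht1 hAB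
  nlinarith

end LinearMap.IsPositive

theorem ConvexOn.abs_det_fderiv_le_one_or {F : Type*} [NormedAddCommGroup F]
    [InnerProductSpace ℝ F] [FiniteDimensional ℝ F] {ψ : F → ℝ} {t : ℝ} {g : F → F}
    (hψ : ConvexOn ℝ univ ψ) (hψd : Differentiable ℝ ψ) (ht0 : 0 < t) (ht1 : t < 1)
    (hg : Function.RightInverse g fun x => (1 - t) • x + t • gradient ψ x) {y : F}
    (hy : DifferentiableAt ℝ g y) :
    DifferentiableAt ℝ (gradient ψ ∘ g) y ∧
      (|(fderiv ℝ g y).det| ≤ 1 ∨ |(fderiv ℝ (gradient ψ ∘ g) y).det| ≤ 1) := by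
  have hφ := hψ.strongConvexOn_interpolationPotential ht0.le
  have hS := fun x => hasGradientAt_interpolationPotential (t := t) (hψd x)
  set A := fderiv ℝ g y
  set B : F →L[ℝ] F := t⁻¹ • (ContinuousLinearMap.id ℝ F - (1 - t) • A)
  have hB : HasFDerivAt (gradient ψ ∘ g) B y := by
    have : gradient ψ ∘ g = fun z => t⁻¹ • (z - (1 - t) • g z) :=
      funext (gradient_comp_eq_of_rightInverse ht0 hg)
    rw [this]
    exact ((hasFDerivAt_id y).sub (hy.hasFDerivAt.const_smul (1 - t))).const_smul t⁻¹
  have hAsymm : (A : F →ₗ[ℝ] F).IsSymmetric :=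
    hφ.isSymmetric_fderiv_of_rightInverse hS hg (by linarith) hy
  have hApos : (A : F →ₗ[ℝ] F).IsPositive :=
    (hφ.isMonotoneOperator_of_rightInverse hS hg (by linarith)).isPositive_of_hasFDerivAt
      hy.hasFDerivAt hAsymm
  have hBpos := (hψ.isMonotoneOperator_gradient_comp hψd ht0.le ht1.le hg).isPositive_of_hasFDerivAt
    hB fun v w => by
      have hAvw : ⟪A v, w⟫ = ⟪v, A w⟫ := hAsymm v w
      simp [B, inner_sub_left, inner_sub_right, real_inner_smul_left, real_inner_smul_right, hAvw]
  refine ⟨hB.differentiableAt, ?_⟩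
  rw [hB.fderiv]
  refine LinearMap.IsPositive.abs_det_le_one_or hApos hBpos ht0 ht1.le ?_
  ext v
  simp [B, smul_sub, smul_smul, ht0.ne']

section Measure

variable {F : Type*} [NormedAddCommGroup F] [InnerProductSpace ℝ F] [FiniteDimensional ℝ F]
  [MeasurableSpace F] [BorelSpace F]

theorem measurable_gradient (f : F → ℝ) : Measurable (gradient f) :=
  (InnerProductSpace.toDual ℝ F).symm.continuous.measurable.comp (measurable_fderiv ℝ f)

theorem LipschitzWith.volume_image_eq_zero {f : F → F} {K : NNReal} (hf : LipschitzWith K f)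
    {s : Set F} (hs : volume s = 0) : volume (f '' s) = 0 := by
  rw [← InnerProductSpace.euclideanHausdorffMeasure_eq_volume,
    Measure.euclideanHausdorffMeasure_def, Measure.smul_apply, smul_eq_zero] at hs ⊢
  refine hs.imp_right fun h => le_zero_iff.mp ?_
  exact (hf.hausdorffMeasure_image_le (by positivity) s).trans_eq (by rw [h, mul_zero])

theorem addHaar_image_le_of_abs_det_le_one (μ : Measure F) [μ.IsAddHaarMeasure] {s : Set F}
    (hs : MeasurableSet s) {f : F → F} {f' : F → F →L[ℝ] F}
    (hf' : ∀ x ∈ s, HasFDerivWithinAt f (f' x) s x) (hdet : ∀ x ∈ s, |(f' x).det| ≤ 1) :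
    μ (f '' s) ≤ μ s :=
  calc μ (f '' s) ≤ ∫⁻ x in s, ENNReal.ofReal |(f' x).det| ∂μ :=
        addHaar_image_le_lintegral_abs_det_fderiv μ hs hf'
    _ ≤ ∫⁻ _ in s, 1 ∂μ := setLIntegral_mono' hs fun x hx => ENNReal.ofReal_le_one.mpr (hdet x hx)
    _ = μ s := setLIntegral_one s

/-- `B` is split according to which of `g`, `g₁` does not expand volume: the first part is charged
to `μ₀ ≤ volume` through `g`, the second to `T_♯μ₀ ≤ volume` through `g₁`, and what remains lies in
the `g`-image of a null set, by Rademacher's theorem. -/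
theorem map_le_volume_of_leftInverse {μ₀ : Measure F} {S T g g₁ : F → F} {K : NNReal}
    (h₀ : μ₀ ≤ volume) (h₁ : μ₀.map T ≤ volume) (hS : Measurable S) (hT : Measurable T)
    (hgS : Function.LeftInverse g S) (hg₁S : ∀ x, g₁ (S x) = T x) (hg : LipschitzWith K g)
    (hdet : ∀ y, DifferentiableAt ℝ g y →
      DifferentiableAt ℝ g₁ y ∧ (|(fderiv ℝ g y).det| ≤ 1 ∨ |(fderiv ℝ g₁ y).det| ≤ 1)) :
    μ₀.map S ≤ volume := by
  rw [Measure.le_iff]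
  intro B hB
  rw [Measure.map_apply hS hB]
  set D := {y | DifferentiableAt ℝ g y}
  set E := {y | |(fderiv ℝ g y).det| ≤ 1}
  have hD : MeasurableSet D := measurableSet_of_differentiableAt ℝ g
  have hE : MeasurableSet E := measurableSet_le
    (ContinuousLinearMap.continuous_det.measurable.comp (measurable_fderiv ℝ g)).abs
    measurable_const
  set B₀ := B ∩ D ∩ E
  set B₁ := (B ∩ D) \ E
  have hB₀ : MeasurableSet B₀ := (hB.inter hD).inter hE
  have hB₁ : MeasurableSet B₁ := (hB.inter hD).diff hE
  have hcover : S ⁻¹' B ⊆ g '' B₀ ∪ T ⁻¹' (g₁ '' B₁) ∪ g '' Dᶜ := by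
    intro x hx
    by_cases hxD : S x ∈ D
    · by_cases hxE : S x ∈ E
      · exact Or.inl (Or.inl ⟨S x, ⟨⟨hx, hxD⟩, hxE⟩, hgS x⟩)
      · exact Or.inl (Or.inr ⟨S x, ⟨⟨hx, hxD⟩, hxE⟩, hg₁S x⟩)
    · exact Or.inr ⟨S x, hxD, hgS x⟩
  have himage₀ : volume (g '' B₀) ≤ volume B₀ :=
    addHaar_image_le_of_abs_det_le_one volume hB₀
      (fun y hy => hy.1.2.hasFDerivAt.hasFDerivWithinAt) fun y hy => hy.2
  have himage₁ : μ₀ (T ⁻¹' (g₁ '' B₁)) ≤ volume B₁ :=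
    calc μ₀ (T ⁻¹' (g₁ '' B₁)) ≤ μ₀.map T (g₁ '' B₁) :=
          Measure.le_map_apply hT.aemeasurable _
      _ ≤ volume (g₁ '' B₁) := h₁ _
      _ ≤ volume B₁ := addHaar_image_le_of_abs_det_le_one volume hB₁
          (fun y hy => (hdet y hy.1.2).1.hasFDerivAt.hasFDerivWithinAt)
          fun y hy => (hdet y hy.1.2).2.resolve_left hy.2
  have hnull : volume (g '' Dᶜ) = 0 := hg.volume_image_eq_zero (ae_iff.mp hg.ae_differentiableAt)
  calc μ₀ (S ⁻¹' B)
      ≤ μ₀ (g '' B₀) + μ₀ (T ⁻¹' (g₁ '' B₁)) + μ₀ (g '' Dᶜ) :=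
        (measure_mono hcover).trans
          ((measure_union_le _ _).trans (add_le_add_left (measure_union_le _ _) _))
    _ ≤ volume B₀ + volume B₁ + 0 :=
        add_le_add (add_le_add ((h₀ _).trans himage₀) himage₁) ((h₀ _).trans hnull.le)
    _ = volume (B ∩ D) := by rw [add_zero, measure_inter_add_sdiff _ hE]
    _ ≤ volume B := measure_mono inter_subset_left

end Measure

theorem ConvexOn.map_interpolation_le_volume {F : Type*} [NormedAddCommGroup F]
    [InnerProductSpace ℝ F] [FiniteDimensional ℝ F] [MeasurableSpace F] [BorelSpace F]
    {μ₀ : Measure F} {ψ : F → ℝ} (hψ : ConvexOn ℝ univ ψ) (hψd : Differentiable ℝ ψ)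
    (h₀ : μ₀ ≤ volume) (h₁ : μ₀.map (gradient ψ) ≤ volume) {t : ℝ} (ht : t ∈ Icc 0 1) :
    μ₀.map (fun x => (1 - t) • x + t • gradient ψ x) ≤ volume := by
  obtain rfl | ht0 := ht.1.eq_or_lt
  · simpa using h₀
  obtain rfl | ht1 := ht.2.eq_or_lt
  · simpa using h₁
  have hφ := hψ.strongConvexOn_interpolationPotential ht0.le
  have hS := fun x => hasGradientAt_interpolationPotential (t := t) (hψd x)
  have hsurj := hφ.surjective_of_hasGradientAt hS (sub_pos.mpr ht1)
  have hg := Function.rightInverse_surjInv hsurj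
  have hgS := hφ.leftInverse_of_rightInverse hS hg (sub_pos.mpr ht1)
  exact map_le_volume_of_leftInverse (g₁ := gradient ψ ∘ Function.surjInv hsurj) h₀ h₁
    ((measurable_id.const_smul _).add ((measurable_gradient ψ).const_smul t))
    (measurable_gradient ψ) hgS (fun x => congrArg (gradient ψ) (hgS x))
    (hφ.lipschitzWith_of_rightInverse hS hg (sub_pos.mpr ht1))
    fun y hy => hψ.abs_det_fderiv_le_one_or hψd ht0 ht1 hg hy

theorem geodesic_convexity_of_density_constraint_general {d : ℕ}
    (Ω : Set (EuclideanSpace ℝ (Fin d)))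
    (ρ₀ ρ₁ : EuclideanSpace ℝ (Fin d) → ℝ)
    (h₀le : ∀ᵐ x, ρ₀ x ≤ 1) (h₁le : ∀ᵐ x, ρ₁ x ≤ 1)
    (μ₀ μ₁ : Measure (EuclideanSpace ℝ (Fin d)))
    (hμ₀ : μ₀ = (volume.restrict Ω).withDensity (fun x => ENNReal.ofReal (ρ₀ x)))
    (hμ₁ : μ₁ = (volume.restrict Ω).withDensity (fun x => ENNReal.ofReal (ρ₁ x)))
    (ψ : EuclideanSpace ℝ (Fin d) → ℝ)
    (hψconv : ConvexOn ℝ Set.univ ψ) (hψdiff : Differentiable ℝ ψ)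
    (T : EuclideanSpace ℝ (Fin d) → EuclideanSpace ℝ (Fin d))
    (hT : ∀ x, T x = gradient ψ x)
    (hTpush : Measure.map T μ₀ = μ₁) :
    ∀ t ∈ Set.Icc (0 : ℝ) 1,
      Measure.map (fun x => (1 - t) • x + t • T x) μ₀ ≤ volume := by
  obtain rfl : T = gradient ψ := funext hT
  have hdensity : ∀ ρ : EuclideanSpace ℝ (Fin d) → ℝ, (∀ᵐ x, ρ x ≤ 1) →
      (volume.restrict Ω).withDensity (fun x => ENNReal.ofReal (ρ x)) ≤ volume := fun ρ hρ =>
    calc (volume.restrict Ω).withDensity (fun x => ENNReal.ofReal (ρ x))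
        ≤ (volume.restrict Ω).withDensity 1 :=
          withDensity_mono (ae_restrict_of_ae (hρ.mono fun x hx => ENNReal.ofReal_le_one.mpr hx))
      _ = volume.restrict Ω := withDensity_one
      _ ≤ volume := Measure.restrict_le_self
  intro t ht
  exact hψconv.map_interpolation_le_volume hψdiff (hμ₀ ▸ hdensity ρ₀ h₀le)
    (hTpush ▸ hμ₁ ▸ hdensity ρ₁ h₁le) ht

/-- Geodesic convexity of the constraint set `{ρ ≤ 1}`: if `ρ₀, ρ₁` are probability
densities on a bounded convex open set `Ω` with densities `≤ 1` and `T = ∇ψ` (gradient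
of a convex function, i.e. the Brenier optimal map) pushes `ρ₀ dx` to `ρ₁ dx`, then
every displacement interpolation `((1-t)id + tT)_♯(ρ₀ dx)` is absolutely continuous
with density `≤ 1`. -/
theorem geodesic_convexity_of_density_constraint {d : ℕ}
    (Ω : Set (EuclideanSpace ℝ (Fin d))) (hΩo : IsOpen Ω) (hΩc : Convex ℝ Ω)
    (hΩb : Bornology.IsBounded Ω)
    (ρ₀ ρ₁ : EuclideanSpace ℝ (Fin d) → ℝ)
    (h₀m : Measurable ρ₀) (h₁m : Measurable ρ₁)
    (h₀pos : ∀ x, 0 ≤ ρ₀ x) (h₁pos : ∀ x, 0 ≤ ρ₁ x)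
    (h₀le : ∀ᵐ x, ρ₀ x ≤ 1) (h₁le : ∀ᵐ x, ρ₁ x ≤ 1)
    (h₀mass : ∫ x in Ω, ρ₀ x = 1) (h₁mass : ∫ x in Ω, ρ₁ x = 1)
    (μ₀ μ₁ : Measure (EuclideanSpace ℝ (Fin d)))
    (hμ₀ : μ₀ = (volume.restrict Ω).withDensity (fun x => ENNReal.ofReal (ρ₀ x)))
    (hμ₁ : μ₁ = (volume.restrict Ω).withDensity (fun x => ENNReal.ofReal (ρ₁ x)))
    (ψ : EuclideanSpace ℝ (Fin d) → ℝ)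
    (hψconv : ConvexOn ℝ Set.univ ψ) (hψdiff : Differentiable ℝ ψ)
    (T : EuclideanSpace ℝ (Fin d) → EuclideanSpace ℝ (Fin d))
    (hT : ∀ x, T x = gradient ψ x)
    (hTpush : Measure.map T μ₀ = μ₁) :
    ∀ t ∈ Set.Icc (0 : ℝ) 1,
      Measure.map (fun x => (1 - t) • x + t • T x) μ₀ ≤ volume :=
  geodesic_convexity_of_density_constraint_general Ω ρ₀ ρ₁ h₀le h₁le μ₀ μ₁ hμ₀ hμ₁ ψ hψconv hψdiff T
    hT hTpush
end
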